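/- If φ : Γ → Λ and ψ : Λ → Γ are k-Lipschitz maps of graphs whose restrictions to vertex sets form a k-quasi-isometry, then for any l ≥ k² + 2k + 2 the composites i_{Γ,l} ∘ ψ ∘ φ and i_{Γ,l} are homotopic as maps Γ → Γ_l, and likewise i_{Λ,l} ∘ φ ∘ ψ ≃ i_{Λ,l} as maps Λ → Λ_l. -/
import Mathlib



open SimpleGraph

/-- Combinatorial homotopy of walks in the 2-complex `Γ_l` obtained from a graph `Γ` by
attaching a 2-cell along each closed edge loop of length strictly less than `l`.  It is
the equivalence relation on walks generated by: congruence under concatenation, removal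
of backtracks, and collapsing closed loops of length `< l` (the boundaries of 2-cells).
Two walks are related iff they are homotopic rel endpoints in `Γ_l`. -/
inductive WalkHomotopic {V : Type*} (Γ : SimpleGraph V) (l : ℕ) :
    ∀ {a b : V}, Γ.Walk a b → Γ.Walk a b → Prop
  | refl {a b : V} (p : Γ.Walk a b) : WalkHomotopic Γ l p p
  | symm {a b : V} {p q : Γ.Walk a b} :
      WalkHomotopic Γ l p q → WalkHomotopic Γ l q p
  | trans {a b : V} {p q r : Γ.Walk a b} :
      WalkHomotopic Γ l p q → WalkHomotopic Γ l q r → WalkHomotopic Γ l p r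
  | append_congr {a b c : V} {p p' : Γ.Walk a b} {q q' : Γ.Walk b c} :
      WalkHomotopic Γ l p p' → WalkHomotopic Γ l q q' →
      WalkHomotopic Γ l (p.append q) (p'.append q')
  | backtrack {a b c : V} (h : Γ.Adj a b) (p : Γ.Walk a c) :
      WalkHomotopic Γ l (SimpleGraph.Walk.cons h (SimpleGraph.Walk.cons h.symm p)) p
  | cell {a : V} (c : Γ.Walk a a) (hc : c.length < l) :
      WalkHomotopic Γ l c SimpleGraph.Walk.nil

/-- A closed edge loop of length `l` in `Γ` is taut if it is not null-homotopic in the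
2-complex `Γ_l` (whose 2-cells are glued along all loops of length `< l`). -/
def IsTautLoop {V : Type*} (Γ : SimpleGraph V) {a : V} (c : Γ.Walk a a) : Prop :=
  ¬ WalkHomotopic Γ c.length c SimpleGraph.Walk.nil

/-- Bowditch's taut loop length spectrum `H(Γ)`: the set of lengths of taut loops. -/
def tautSpectrum {V : Type*} (Γ : SimpleGraph V) : Set ℕ :=
  {l | ∃ (a : V) (c : Γ.Walk a a), c.length = l ∧ IsTautLoop Γ c}

/-- The fundamental group (as a pointed set of homotopy classes of loops) of the
2-complex `Γ_l`, based at `v`: closed walks at `v` modulo homotopy in `Γ_l`. -/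
def pi1 {V : Type*} (Γ : SimpleGraph V) (l : ℕ) (v : V) : Type _ :=
  Quot (fun p q : Γ.Walk v v => WalkHomotopic Γ l p q)

/-- Homotopy in `Γ_l` implies homotopy in `Γ_{l'}` for `l ≤ l'`. -/
theorem WalkHomotopic.mono {V : Type*} {Γ : SimpleGraph V} {l l' : ℕ} (h : l ≤ l')
    {a b : V} {p q : Γ.Walk a b} (hp : WalkHomotopic Γ l p q) :
    WalkHomotopic Γ l' p q := by
  induction hp with
  | refl p => exact .refl p
  | symm _ ih => exact .symm ih
  | trans _ _ ih₁ ih₂ => exact .trans ih₁ ih₂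
  | append_congr _ _ ih₁ ih₂ => exact .append_congr ih₁ ih₂
  | backtrack h p => exact .backtrack h p
  | cell c hc => exact .cell c (lt_of_lt_of_le hc h)

/-- The map `π₁(Γ_l) → π₁(Γ_{l+1})` induced by the inclusion `Γ_l ⊆ Γ_{l+1}`. -/
def pi1Map {V : Type*} (Γ : SimpleGraph V) (l : ℕ) (v : V) :
    pi1 Γ l v → pi1 Γ (l + 1) v :=
  Quot.map id (fun _ _ h => h.mono (Nat.le_succ l))

/-- Bowditch's notion of `k`-quasi-isometry between connected graphs: a pair of
`k`-Lipschitz maps between the vertex sets (with the edge-path metric `SimpleGraph.dist`)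
whose composites displace every vertex by at most `k`. -/
def BowditchQI {V W : Type*} (Γ : SimpleGraph V) (Λ : SimpleGraph W) (k : ℕ) : Prop :=
  ∃ (φ : V → W) (ψ : W → V),
    (∀ x y : V, Λ.dist (φ x) (φ y) ≤ k * Γ.dist x y) ∧
    (∀ x y : W, Γ.dist (ψ x) (ψ y) ≤ k * Λ.dist x y) ∧
    (∀ x : V, Γ.dist x (ψ (φ x)) ≤ k) ∧
    (∀ y : W, Λ.dist y (φ (ψ y)) ≤ k)

/-- `IsTrace Γ Λ k f c c'` says that the walk `c'` in `Λ` is obtained from the walk `c`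
in `Γ` by applying the `k`-Lipschitz vertex map `f` and joining the images of consecutive
vertices of `c` by paths of length at most `k`.  This is the combinatorial realization of
the continuous map `Γ → Λ` induced by `f`, applied to the path `c`. -/
inductive IsTrace {V W : Type*} (Γ : SimpleGraph V) (Λ : SimpleGraph W) (k : ℕ) (f : V → W) :
    ∀ {x y : V}, Γ.Walk x y → Λ.Walk (f x) (f y) → Prop
  | nil (x : V) : IsTrace Γ Λ k f (SimpleGraph.Walk.nil : Γ.Walk x x) SimpleGraph.Walk.nil
  | cons {x y z : V} (h : Γ.Adj x y) (c : Γ.Walk y z)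
      (p : Λ.Walk (f x) (f y)) (c' : Λ.Walk (f y) (f z)) :
      p.length ≤ k → IsTrace Γ Λ k f c c' →
      IsTrace Γ Λ k f (SimpleGraph.Walk.cons h c) (p.append c')

section Aux

variable {V : Type*} {Γ : SimpleGraph V} {l : ℕ}

lemma WalkHomotopic.reverse_append_self {a b : V} (p : Γ.Walk a b) :
    WalkHomotopic Γ l (p.reverse.append p) SimpleGraph.Walk.nil := by
  induction p with
  | nil => exact .refl _
  | @cons u v w h p ih =>
    have e : (SimpleGraph.Walk.cons h p).reverse.append (SimpleGraph.Walk.cons h p)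
        = p.reverse.append
            (SimpleGraph.Walk.cons h.symm (SimpleGraph.Walk.cons h p)) := by
      rw [SimpleGraph.Walk.reverse_cons, ← SimpleGraph.Walk.append_assoc]
      rfl
    rw [e]
    exact .trans (.append_congr (.refl p.reverse) (.backtrack h.symm p)) ih

lemma WalkHomotopic.of_append_reverse {a b : V} {p q : Γ.Walk a b}
    (h : WalkHomotopic Γ l (p.append q.reverse) SimpleGraph.Walk.nil) :
    WalkHomotopic Γ l p q := by
  have h1 : WalkHomotopic Γ l ((p.append q.reverse).append q) q :=
    WalkHomotopic.append_congr h (.refl q)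
  rw [← SimpleGraph.Walk.append_assoc] at h1
  have h3 : WalkHomotopic Γ l (p.append (q.reverse.append q))
      (p.append SimpleGraph.Walk.nil) :=
    WalkHomotopic.append_congr (.refl p) (WalkHomotopic.reverse_append_self q)
  rw [SimpleGraph.Walk.append_nil] at h3
  exact .trans (.symm h3) h1

lemma WalkHomotopic.cons_congr {a b c : V} (h : Γ.Adj a b) {p q : Γ.Walk b c}
    (hpq : WalkHomotopic Γ l p q) :
    WalkHomotopic Γ l (SimpleGraph.Walk.cons h p) (SimpleGraph.Walk.cons h q) :=
  WalkHomotopic.append_congr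
    (.refl (SimpleGraph.Walk.cons h SimpleGraph.Walk.nil)) hpq

lemma trace_homotopic {K D : ℕ} {f : V → V}
    (hl : K + 2 * D + 2 ≤ l)
    (hD : ∀ v : V, ∃ w : Γ.Walk v (f v), w.length ≤ D)
    {x y : V} {c : Γ.Walk x y} {c' : Γ.Walk (f x) (f y)}
    (ht : IsTrace Γ Γ K f c c') :
    ∀ (q : Γ.Walk x (f x)) (r : Γ.Walk y (f y)), q.length ≤ D → r.length ≤ D →
      WalkHomotopic Γ l c (q.append (c'.append r.reverse)) := by
  induction ht with
  | nil v =>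
    intro q r hq hr
    refine .symm (.cell _ ?_)
    simp only [SimpleGraph.Walk.length_append, SimpleGraph.Walk.length_reverse,
      SimpleGraph.Walk.length_nil]
    omega
  | @cons u v w h c0 p c0' hp ht0 ih =>
    intro q r hq hr
    obtain ⟨q', hq'⟩ := hD v
    have ihc := ih q' r hq' hr
    -- Step A : cons h c0 ~ cons h (q'.append (c0'.append r.reverse))
    have hA := WalkHomotopic.cons_congr h ihc
    -- Step B : cons h q' ~ q.append p
    have hB : WalkHomotopic Γ l (SimpleGraph.Walk.cons h q') (q.append p) := by
      refine WalkHomotopic.of_append_reverse (.cell _ ?_)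
      simp only [SimpleGraph.Walk.length_append, SimpleGraph.Walk.length_reverse,
        SimpleGraph.Walk.length_cons]
      omega
    -- Step C
    have hC : WalkHomotopic Γ l
        (SimpleGraph.Walk.cons h (q'.append (c0'.append r.reverse)))
        ((q.append p).append (c0'.append r.reverse)) :=
      WalkHomotopic.append_congr hB
        (WalkHomotopic.refl (c0'.append r.reverse))
    have e : (q.append p).append (c0'.append r.reverse)
        = q.append ((p.append c0').append r.reverse) := by
      simp [SimpleGraph.Walk.append_assoc]
    rw [← e]
    exact .trans hA hC

end Aux

/-- If `φ : Γ → Λ` and `ψ : Λ → Γ` are `k`-Lipschitz maps forming a `k`-quasi-isometry,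
then for any `l ≥ k² + 2k + 2` the composites `i ∘ ψ ∘ φ` and `i : Γ → Γ_l` are homotopic,
and likewise `i ∘ φ ∘ ψ ≃ i : Λ → Λ_l`.  Combinatorially: every closed loop `c` of `Γ` is
homotopic in `Γ_l`, after conjugating by any short path `q` from its basepoint to the image
basepoint, to any trace of `c` under `ψ ∘ φ` (which is `k²`-Lipschitz); and symmetrically. -/
theorem qi_composite_homotopic_to_inclusion
    {V W : Type*} {Γ : SimpleGraph V} {Λ : SimpleGraph W}
    (hΓ : Γ.Connected) (hΛ : Λ.Connected) (k : ℕ) (hk : 0 < k)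
    (φ : V → W) (ψ : W → V)
    (hφ : ∀ x y : V, Λ.dist (φ x) (φ y) ≤ k * Γ.dist x y)
    (hψ : ∀ x y : W, Γ.dist (ψ x) (ψ y) ≤ k * Λ.dist x y)
    (hψφ : ∀ x : V, Γ.dist x (ψ (φ x)) ≤ k)
    (hφψ : ∀ y : W, Λ.dist y (φ (ψ y)) ≤ k) :
    ∀ l : ℕ, k ^ 2 + 2 * k + 2 ≤ l →
      (∀ (x : V) (c : Γ.Walk x x) (c' : Γ.Walk (ψ (φ x)) (ψ (φ x)))
        (q : Γ.Walk x (ψ (φ x))),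
        IsTrace Γ Γ (k ^ 2) (ψ ∘ φ) c c' → q.length ≤ k →
        WalkHomotopic Γ l c (q.append (c'.append q.reverse))) ∧
      (∀ (y : W) (c : Λ.Walk y y) (c' : Λ.Walk (φ (ψ y)) (φ (ψ y)))
        (q : Λ.Walk y (φ (ψ y))),
        IsTrace Λ Λ (k ^ 2) (φ ∘ ψ) c c' → q.length ≤ k →
        WalkHomotopic Λ l c (q.append (c'.append q.reverse))) := by
  intro l hl
  constructor
  · intro x c c' q ht hq
    refine trace_homotopic (K := k ^ 2) (D := k) (f := ψ ∘ φ) hl ?_ ht q q hq hq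
    intro v
    obtain ⟨w, hw⟩ := hΓ.exists_walk_length_eq_dist v (ψ (φ v))
    exact ⟨w, hw ▸ hψφ v⟩
  · intro y c c' q ht hq
    refine trace_homotopic (K := k ^ 2) (D := k) (f := φ ∘ ψ) hl ?_ ht q q hq hq
    intro v
    obtain ⟨w, hw⟩ := hΛ.exists_walk_length_eq_dist v (φ (ψ v))
    exact ⟨w, hw ▸ hφψ v⟩
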